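/- Under the product test-channel structure, the rate vector R defined by R_i = I(X_i; Z_i | Z_{{1,...,i-1}}, S) for 1 ≤ i ≤ M satisfies all constraints Σ_{i∈I} R_i ≥ I(X_I; Z_I | Z_{I^c}, S) for every nonempty I ⊆ {1,...,M}, and makes the M constraints corresponding to the nested sets I = {m,...,M}, 1 ≤ m ≤ M, hold with equality. -/

import Mathlib

open Finset

/-- Probability that a random variable `f` (on finite sample space `Ω` with pmf `μ`)
takes the value `a`. -/
noncomputable def pr {Ω : Type} [Fintype Ω] (μ : Ω → ℝ) {A : Type} [Fintype A] [DecidableEq A]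
    (f : Ω → A) (a : A) : ℝ :=
  ∑ ω, if f ω = a then μ ω else 0

/-- Shannon entropy of a finite random variable. -/
noncomputable def ent {Ω : Type} [Fintype Ω] (μ : Ω → ℝ) {A : Type} [Fintype A] [DecidableEq A]
    (f : Ω → A) : ℝ :=
  -∑ a, pr μ f a * Real.log (pr μ f a)

/-- Conditional entropy `H(f | g)`. -/
noncomputable def condEnt {Ω : Type} [Fintype Ω] (μ : Ω → ℝ) {A B : Type}
    [Fintype A] [DecidableEq A] [Fintype B] [DecidableEq B] (f : Ω → A) (g : Ω → B) : ℝ :=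
  ent μ (fun ω => (f ω, g ω)) - ent μ g

/-- Mutual information `I(f ; g)`. -/
noncomputable def mi {Ω : Type} [Fintype Ω] (μ : Ω → ℝ) {A B : Type}
    [Fintype A] [DecidableEq A] [Fintype B] [DecidableEq B] (f : Ω → A) (g : Ω → B) : ℝ :=
  ent μ f + ent μ g - ent μ (fun ω => (f ω, g ω))

/-- Conditional mutual information `I(f ; g | h)`. -/
noncomputable def cmi {Ω : Type} [Fintype Ω] (μ : Ω → ℝ) {A B C : Type}
    [Fintype A] [DecidableEq A] [Fintype B] [DecidableEq B] [Fintype C] [DecidableEq C]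
    (f : Ω → A) (g : Ω → B) (h : Ω → C) : ℝ :=
  ent μ (fun ω => (f ω, h ω)) + ent μ (fun ω => (g ω, h ω))
    - ent μ (fun ω => (f ω, g ω, h ω)) - ent μ h

section ProductStructure

variable {M : ℕ} {𝒳 𝒵 : Fin M → Type} {𝒮 : Type}

/-- Sample space for the multiterminal setup: sources, side information, auxiliaries. -/
abbrev Samp (𝒳 𝒵 : Fin M → Type) (𝒮 : Type) := ((∀ i, 𝒳 i) × 𝒮) × (∀ i, 𝒵 i)

/-- The joint pmf `p(x_{1..M}, s) ∏ₖ qₖ(z_k | x_k)` (product test-channel structure). -/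
noncomputable def jointPMF (p : (∀ i, 𝒳 i) × 𝒮 → ℝ) (q : ∀ i, 𝒳 i → 𝒵 i → ℝ) :
    Samp 𝒳 𝒵 𝒮 → ℝ :=
  fun ω => p ω.1 * ∏ i, q i (ω.1.1 i) (ω.2 i)

/-- The tuple `X_I` of source variables indexed by `I`. -/
def XI (I : Finset (Fin M)) : Samp 𝒳 𝒵 𝒮 → ∀ i : I, 𝒳 i := fun ω i => ω.1.1 i

/-- The tuple `Z_I` of auxiliary variables indexed by `I`. -/
def ZI (I : Finset (Fin M)) : Samp 𝒳 𝒵 𝒮 → ∀ i : I, 𝒵 i := fun ω i => ω.2 i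

/-- The side information variable `S`. -/
def Sv : Samp 𝒳 𝒵 𝒮 → 𝒮 := fun ω => ω.1.2

end ProductStructure

set_option linter.unusedSectionVars false
set_option linter.unusedVariables false
set_option linter.unreachableTactic false
set_option linter.unnecessarySeqFocus false
set_option linter.unusedTactic false

lemma gibbs_term {x u v w : ℝ} (hx : 0 ≤ x) (hxu : x ≤ u) (hxv : x ≤ v) (hxw : x ≤ w) :
    x - u * v / w ≤ x * (Real.log x + Real.log w - Real.log u - Real.log v) := by
  rcases eq_or_lt_of_le hx with h0 | h0
  · have hu : 0 ≤ u := le_trans hx hxu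
    have hv : 0 ≤ v := le_trans hx hxv
    have hw : 0 ≤ w := le_trans hx hxw
    rw [← h0]
    simp only [zero_mul, zero_sub]
    exact neg_nonpos_of_nonneg (div_nonneg (mul_nonneg hu hv) hw)
  · have hu : 0 < u := lt_of_lt_of_le h0 hxu
    have hv : 0 < v := lt_of_lt_of_le h0 hxv
    have hw : 0 < w := lt_of_lt_of_le h0 hxw
    have hlog : Real.log (u * v / (x * w)) ≤ u * v / (x * w) - 1 :=
      Real.log_le_sub_one_of_pos (by positivity)
    have hle : Real.log (u * v / (x * w)) = Real.log u + Real.log v - Real.log x - Real.log w := by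
      rw [Real.log_div (by positivity) (by positivity), Real.log_mul hu.ne' hv.ne',
        Real.log_mul h0.ne' hw.ne']
      ring
    rw [hle] at hlog
    have h3 := mul_le_mul_of_nonneg_left hlog hx
    have h2 : x * (u * v / (x * w) - 1) = u * v / w - x := by
      field_simp
    rw [h2] at h3
    have h4 : x * (Real.log x + Real.log w - Real.log u - Real.log v)
        = -(x * (Real.log u + Real.log v - Real.log x - Real.log w)) := by ring
    rw [h4]
    linarith

section Basic
variable {Ω : Type} [Fintype Ω] {A B C : Type}
  [Fintype A] [DecidableEq A] [Fintype B] [DecidableEq B] [Fintype C] [DecidableEq C]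
  (μ : Ω → ℝ)

lemma pr_nonneg (hμ : ∀ ω, 0 ≤ μ ω) (f : Ω → A) (a : A) : 0 ≤ pr μ f a :=
  Finset.sum_nonneg fun ω _ => by by_cases h : f ω = a <;> simp [h, hμ ω]

lemma pr_total (f : Ω → A) : ∑ a, pr μ f a = ∑ ω, μ ω := by
  unfold pr
  rw [Finset.sum_comm]
  refine Finset.sum_congr rfl fun ω _ => ?_
  rw [Finset.sum_ite_eq Finset.univ (f ω)]
  simp

lemma pr_fst_marg (f : Ω → A) (g : Ω → B) (b : B) :
    ∑ a, pr μ (fun ω => (f ω, g ω)) (a, b) = pr μ g b := by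
  unfold pr
  rw [Finset.sum_comm]
  refine Finset.sum_congr rfl fun ω _ => ?_
  have h1 : ∀ a, (if (f ω, g ω) = (a, b) then μ ω else 0)
      = if f ω = a then (if g ω = b then μ ω else 0) else 0 := by
    intro a; by_cases h1 : f ω = a <;> by_cases h2 : g ω = b <;> simp [h1, h2, Prod.ext_iff]
  simp only [h1]
  rw [Finset.sum_ite_eq Finset.univ (f ω)]
  simp

lemma pr_mid_marg (f : Ω → A) (g : Ω → B) (h : Ω → C) (a : A) (c : C) :
    ∑ b, pr μ (fun ω => (f ω, g ω, h ω)) (a, b, c) = pr μ (fun ω => (f ω, h ω)) (a, c) := by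
  unfold pr
  rw [Finset.sum_comm]
  refine Finset.sum_congr rfl fun ω _ => ?_
  have h1 : ∀ b, (if (f ω, g ω, h ω) = (a, b, c) then μ ω else 0)
      = if g ω = b then (if (f ω, h ω) = (a, c) then μ ω else 0) else 0 := by
    intro b; by_cases h1 : g ω = b <;> by_cases h2 : (f ω, h ω) = (a, c) <;>
      simp_all [Prod.ext_iff]
  simp only [h1]
  rw [Finset.sum_ite_eq Finset.univ (g ω)]
  simp

lemma pr_pair_fst_marg (f : Ω → A) (g : Ω → B) (h : Ω → C) (b : B) (c : C) :
    ∑ a, pr μ (fun ω => (f ω, g ω, h ω)) (a, b, c) = pr μ (fun ω => (g ω, h ω)) (b, c) :=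
  pr_fst_marg μ f (fun ω => (g ω, h ω)) (b, c)

end Basic

section Sums
variable {A B C : Type} [Fintype A] [Fintype B] [Fintype C]

lemma sum3_rot (F : A → B → C → ℝ) :
    ∑ a, ∑ b, ∑ c, F a b c = ∑ c, ∑ a, ∑ b, F a b c :=
  (Finset.sum_congr rfl fun _ _ => Finset.sum_comm).trans Finset.sum_comm

lemma sum3_comb {F G H K T : A → B → C → ℝ}
    (h : ∀ a b c, F a b c + G a b c - H a b c - K a b c = T a b c) :
    ((∑ a, ∑ b, ∑ c, F a b c) + (∑ a, ∑ b, ∑ c, G a b c)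
      - (∑ a, ∑ b, ∑ c, H a b c)) - (∑ a, ∑ b, ∑ c, K a b c)
      = ∑ a, ∑ b, ∑ c, T a b c := by
  simp only [← Finset.sum_add_distrib, ← Finset.sum_sub_distrib]
  exact Finset.sum_congr rfl fun a _ => Finset.sum_congr rfl fun b _ =>
    Finset.sum_congr rfl fun c _ => h a b c

end Sums

section Basic2
variable {Ω : Type} [Fintype Ω] {A B C : Type}
  [Fintype A] [DecidableEq A] [Fintype B] [DecidableEq B] [Fintype C] [DecidableEq C]
  (μ : Ω → ℝ)

lemma cmi_eq_sum (f : Ω → A) (g : Ω → B) (h : Ω → C) :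
    cmi μ f g h = ∑ a, ∑ b, ∑ c,
      pr μ (fun ω => (f ω, g ω, h ω)) (a, b, c) *
        (Real.log (pr μ (fun ω => (f ω, g ω, h ω)) (a, b, c))
          + Real.log (pr μ h c)
          - Real.log (pr μ (fun ω => (f ω, h ω)) (a, c))
          - Real.log (pr μ (fun ω => (g ω, h ω)) (b, c))) := by
  have e3 : ent μ (fun ω => (f ω, g ω, h ω))
      = -∑ a, ∑ b, ∑ c, pr μ (fun ω => (f ω, g ω, h ω)) (a, b, c)
          * Real.log (pr μ (fun ω => (f ω, g ω, h ω)) (a, b, c)) := by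
    unfold ent
    rw [Fintype.sum_prod_type]
    congr 1
    refine Finset.sum_congr rfl fun a _ => ?_
    rw [Fintype.sum_prod_type]
  have e1 : ent μ (fun ω => (f ω, h ω))
      = -∑ a, ∑ b, ∑ c, pr μ (fun ω => (f ω, g ω, h ω)) (a, b, c)
          * Real.log (pr μ (fun ω => (f ω, h ω)) (a, c)) := by
    unfold ent
    rw [Fintype.sum_prod_type]
    congr 1
    refine Finset.sum_congr rfl fun a _ => ?_
    rw [Finset.sum_comm]
    refine Finset.sum_congr rfl fun c _ => ?_
    rw [← pr_mid_marg μ f g h a c, Finset.sum_mul]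
  have e2 : ent μ (fun ω => (g ω, h ω))
      = -∑ a, ∑ b, ∑ c, pr μ (fun ω => (f ω, g ω, h ω)) (a, b, c)
          * Real.log (pr μ (fun ω => (g ω, h ω)) (b, c)) := by
    unfold ent
    rw [Fintype.sum_prod_type]
    congr 1
    conv_rhs => rw [Finset.sum_comm]
    refine Finset.sum_congr rfl fun b _ => ?_
    conv_rhs => rw [Finset.sum_comm]
    refine Finset.sum_congr rfl fun c _ => ?_
    rw [← pr_pair_fst_marg μ f g h b c, Finset.sum_mul]
  have e4 : ent μ h
      = -∑ a, ∑ b, ∑ c, pr μ (fun ω => (f ω, g ω, h ω)) (a, b, c)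
          * Real.log (pr μ h c) := by
    unfold ent
    congr 1
    rw [sum3_rot]
    refine Finset.sum_congr rfl fun c _ => ?_
    have hm3 : pr μ h c = ∑ a, ∑ b, pr μ (fun ω => (f ω, g ω, h ω)) (a, b, c) := by
      rw [← pr_fst_marg μ f h c]
      exact Finset.sum_congr rfl fun a _ => (pr_mid_marg μ f g h a c).symm
    rw [hm3, Finset.sum_mul]
    exact Finset.sum_congr rfl fun a _ => by rw [Finset.sum_mul]
  have key := sum3_comb (A := A) (B := B) (C := C)
    (F := fun a b c => pr μ (fun ω => (f ω, g ω, h ω)) (a, b, c)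
      * Real.log (pr μ (fun ω => (f ω, g ω, h ω)) (a, b, c)))
    (G := fun a b c => pr μ (fun ω => (f ω, g ω, h ω)) (a, b, c) * Real.log (pr μ h c))
    (H := fun a b c => pr μ (fun ω => (f ω, g ω, h ω)) (a, b, c)
      * Real.log (pr μ (fun ω => (f ω, h ω)) (a, c)))
    (K := fun a b c => pr μ (fun ω => (f ω, g ω, h ω)) (a, b, c)
      * Real.log (pr μ (fun ω => (g ω, h ω)) (b, c)))
    (T := fun a b c => pr μ (fun ω => (f ω, g ω, h ω)) (a, b, c) *
        (Real.log (pr μ (fun ω => (f ω, g ω, h ω)) (a, b, c))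
          + Real.log (pr μ h c)
          - Real.log (pr μ (fun ω => (f ω, h ω)) (a, c))
          - Real.log (pr μ (fun ω => (g ω, h ω)) (b, c))))
    (fun a b c => by ring)
  unfold cmi
  rw [e1, e2, e3, e4]
  linarith [key]

lemma cmi_nonneg (hμ : ∀ ω, 0 ≤ μ ω) (f : Ω → A) (g : Ω → B) (h : Ω → C) :
    0 ≤ cmi μ f g h := by
  rw [cmi_eq_sum]
  have hq0 : ∀ a b c, 0 ≤ pr μ (fun ω => (f ω, g ω, h ω)) (a, b, c) :=
    fun a b c => pr_nonneg μ hμ _ _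
  have hm1 : ∀ a b c, pr μ (fun ω => (f ω, g ω, h ω)) (a, b, c)
      ≤ pr μ (fun ω => (f ω, h ω)) (a, c) := fun a b c => by
    rw [← pr_mid_marg μ f g h a c]
    exact Finset.single_le_sum (fun b _ => hq0 a b c) (Finset.mem_univ b)
  have hm2 : ∀ a b c, pr μ (fun ω => (f ω, g ω, h ω)) (a, b, c)
      ≤ pr μ (fun ω => (g ω, h ω)) (b, c) := fun a b c => by
    rw [← pr_pair_fst_marg μ f g h b c]
    exact Finset.single_le_sum (fun a _ => hq0 a b c) (Finset.mem_univ a)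
  have hm3 : ∀ a b c, pr μ (fun ω => (f ω, g ω, h ω)) (a, b, c) ≤ pr μ h c := fun a b c => by
    refine le_trans (hm1 a b c) ?_
    rw [← pr_fst_marg μ f h c]
    exact Finset.single_le_sum (f := fun a => pr μ (fun ω => (f ω, h ω)) (a, c))
      (fun a _ => pr_nonneg μ hμ _ _) (Finset.mem_univ a)
  have step : ∀ a b c, pr μ (fun ω => (f ω, g ω, h ω)) (a, b, c)
        - pr μ (fun ω => (f ω, h ω)) (a, c) * pr μ (fun ω => (g ω, h ω)) (b, c) / pr μ h c
      ≤ pr μ (fun ω => (f ω, g ω, h ω)) (a, b, c) *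
        (Real.log (pr μ (fun ω => (f ω, g ω, h ω)) (a, b, c))
          + Real.log (pr μ h c)
          - Real.log (pr μ (fun ω => (f ω, h ω)) (a, c))
          - Real.log (pr μ (fun ω => (g ω, h ω)) (b, c))) :=
    fun a b c => gibbs_term (hq0 a b c) (hm1 a b c) (hm2 a b c) (hm3 a b c)
  have hsum : ∑ a, ∑ b, ∑ c, (pr μ (fun ω => (f ω, g ω, h ω)) (a, b, c)
        - pr μ (fun ω => (f ω, h ω)) (a, c) * pr μ (fun ω => (g ω, h ω)) (b, c) / pr μ h c)
      ≤ ∑ a, ∑ b, ∑ c, pr μ (fun ω => (f ω, g ω, h ω)) (a, b, c) *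
        (Real.log (pr μ (fun ω => (f ω, g ω, h ω)) (a, b, c))
          + Real.log (pr μ h c)
          - Real.log (pr μ (fun ω => (f ω, h ω)) (a, c))
          - Real.log (pr μ (fun ω => (g ω, h ω)) (b, c))) :=
    Finset.sum_le_sum fun a _ => Finset.sum_le_sum fun b _ => Finset.sum_le_sum fun c _ =>
      step a b c
  refine le_trans ?_ hsum
  simp only [Finset.sum_sub_distrib]
  rw [sum3_rot (fun a b c => pr μ (fun ω => (f ω, g ω, h ω)) (a, b, c)),
    sum3_rot (fun a b c => pr μ (fun ω => (f ω, h ω)) (a, c)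
      * pr μ (fun ω => (g ω, h ω)) (b, c) / pr μ h c)]
  have h1 : ∑ c, ∑ a, ∑ b, pr μ (fun ω => (f ω, g ω, h ω)) (a, b, c) = ∑ c, pr μ h c := by
    refine Finset.sum_congr rfl fun c _ => ?_
    rw [show ∑ a, ∑ b, pr μ (fun ω => (f ω, g ω, h ω)) (a, b, c)
        = ∑ a, pr μ (fun ω => (f ω, h ω)) (a, c) from
      Finset.sum_congr rfl fun a _ => pr_mid_marg μ f g h a c]
    exact pr_fst_marg μ f h c
  have h2 : ∑ c, ∑ a, ∑ b, (pr μ (fun ω => (f ω, h ω)) (a, c)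
        * pr μ (fun ω => (g ω, h ω)) (b, c) / pr μ h c)
      ≤ ∑ c, pr μ h c := by
    refine Finset.sum_le_sum fun c _ => ?_
    have e1 : ∀ a, ∑ b, (pr μ (fun ω => (f ω, h ω)) (a, c)
          * pr μ (fun ω => (g ω, h ω)) (b, c) / pr μ h c)
        = pr μ (fun ω => (f ω, h ω)) (a, c) * pr μ h c / pr μ h c := by
      intro a
      rw [← Finset.sum_div, ← Finset.mul_sum, pr_fst_marg μ g h c]
    rw [show (∑ a, ∑ b, (pr μ (fun ω => (f ω, h ω)) (a, c)
          * pr μ (fun ω => (g ω, h ω)) (b, c) / pr μ h c))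
        = ∑ a, pr μ (fun ω => (f ω, h ω)) (a, c) * pr μ h c / pr μ h c from
      Finset.sum_congr rfl fun a _ => e1 a]
    rw [← Finset.sum_div, ← Finset.sum_mul, pr_fst_marg μ f h c]
    rcases eq_or_ne (pr μ h c) 0 with h0 | h0
    · simp [h0]
    · rw [mul_div_assoc, div_self h0, mul_one]
  linarith

lemma cmi_eq_zero_of_indep (hμ : ∀ ω, 0 ≤ μ ω) (f : Ω → A) (g : Ω → B) (h : Ω → C)
    (hfact : ∀ a b c, pr μ (fun ω => (f ω, g ω, h ω)) (a, b, c) * pr μ h c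
      = pr μ (fun ω => (f ω, h ω)) (a, c) * pr μ (fun ω => (g ω, h ω)) (b, c)) :
    cmi μ f g h = 0 := by
  rw [cmi_eq_sum]
  refine Finset.sum_eq_zero fun a _ => Finset.sum_eq_zero fun b _ =>
    Finset.sum_eq_zero fun c _ => ?_
  rcases eq_or_lt_of_le (pr_nonneg μ hμ (fun ω => (f ω, g ω, h ω)) (a, b, c)) with h0 | h0
  · rw [← h0, zero_mul]
  · have hm1 : 0 < pr μ (fun ω => (f ω, h ω)) (a, c) := by
      refine lt_of_lt_of_le h0 ?_
      rw [← pr_mid_marg μ f g h a c]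
      exact Finset.single_le_sum (f := fun b => pr μ (fun ω => (f ω, g ω, h ω)) (a, b, c))
        (fun b _ => pr_nonneg μ hμ _ _) (Finset.mem_univ b)
    have hm2 : 0 < pr μ (fun ω => (g ω, h ω)) (b, c) := by
      refine lt_of_lt_of_le h0 ?_
      rw [← pr_pair_fst_marg μ f g h b c]
      exact Finset.single_le_sum (f := fun a => pr μ (fun ω => (f ω, g ω, h ω)) (a, b, c))
        (fun a _ => pr_nonneg μ hμ _ _) (Finset.mem_univ a)
    have hm3 : 0 < pr μ h c := by
      refine lt_of_lt_of_le hm1 ?_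
      rw [← pr_fst_marg μ f h c]
      exact Finset.single_le_sum (f := fun a => pr μ (fun ω => (f ω, h ω)) (a, c))
        (fun a _ => pr_nonneg μ hμ _ _) (Finset.mem_univ a)
    have hlog : Real.log (pr μ (fun ω => (f ω, g ω, h ω)) (a, b, c)) + Real.log (pr μ h c)
        = Real.log (pr μ (fun ω => (f ω, h ω)) (a, c))
          + Real.log (pr μ (fun ω => (g ω, h ω)) (b, c)) := by
      rw [← Real.log_mul h0.ne' hm3.ne', ← Real.log_mul hm1.ne' hm2.ne', hfact a b c]
    rw [show Real.log (pr μ (fun ω => (f ω, g ω, h ω)) (a, b, c)) + Real.log (pr μ h c)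
        - Real.log (pr μ (fun ω => (f ω, h ω)) (a, c))
        - Real.log (pr μ (fun ω => (g ω, h ω)) (b, c)) = 0 by linarith [hlog]]
    exact mul_zero _
end Basic2

section Inj
set_option linter.unusedSectionVars false
variable {Ω : Type} [Fintype Ω] {A B C A' B' C' : Type}
  [Fintype A] [DecidableEq A] [Fintype B] [DecidableEq B] [Fintype C] [DecidableEq C]
  [Fintype A'] [DecidableEq A'] [Fintype B'] [DecidableEq B'] [Fintype C'] [DecidableEq C']
  (μ : Ω → ℝ)

lemma pr_comp_inj (f : Ω → A) {e : A → B} (he : Function.Injective e) (a : A) :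
    pr μ (fun ω => e (f ω)) (e a) = pr μ f a :=
  Finset.sum_congr rfl fun ω _ => by simp [he.eq_iff]

lemma ent_comp_inj (f : Ω → A) {e : A → B} (he : Function.Injective e) :
    ent μ (fun ω => e (f ω)) = ent μ f := by
  unfold ent
  congr 1
  have hvan : ∀ b ∈ Finset.univ, b ∉ Finset.univ.image e →
      pr μ (fun ω => e (f ω)) b * Real.log (pr μ (fun ω => e (f ω)) b) = 0 := by
    intro b _ hb
    have h0 : pr μ (fun ω => e (f ω)) b = 0 := by
      refine Finset.sum_eq_zero fun ω _ => if_neg fun hc => hb ?_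
      exact Finset.mem_image.2 ⟨f ω, Finset.mem_univ _, hc⟩
    rw [h0, zero_mul]
  rw [← Finset.sum_subset (Finset.subset_univ (Finset.univ.image e)) hvan,
    Finset.sum_image (fun x _ y _ hxy => he hxy)]
  exact Finset.sum_congr rfl fun a _ => by rw [pr_comp_inj μ f he a]

lemma ent_comp_inj' (f' : Ω → B) (f : Ω → A) (e : A → B) (he : Function.Injective e)
    (hc : ∀ ω, f' ω = e (f ω)) : ent μ f' = ent μ f := by
  have hf : f' = fun ω => e (f ω) := funext hc
  rw [hf, ent_comp_inj μ f he]

lemma inj_pl {e : A → B} (he : Function.Injective e) :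
    Function.Injective (fun p : A × C => (e p.1, p.2)) := by
  rintro ⟨a, c⟩ ⟨a', c'⟩ h
  simp only [Prod.mk.injEq] at h
  exact Prod.ext (he h.1) h.2

lemma inj_pr {e : A → B} (he : Function.Injective e) :
    Function.Injective (fun p : C × A => (p.1, e p.2)) := by
  rintro ⟨c, a⟩ ⟨c', a'⟩ h
  simp only [Prod.mk.injEq] at h
  exact Prod.ext h.1 (he h.2)

lemma cmi_f_inj (f' : Ω → A') (f : Ω → A) (g : Ω → B) (h : Ω → C) (e : A → A')
    (he : Function.Injective e) (hc : ∀ ω, f' ω = e (f ω)) :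
    cmi μ f' g h = cmi μ f g h := by
  unfold cmi
  have h1 : ent μ (fun ω => (f' ω, h ω)) = ent μ (fun ω => (f ω, h ω)) :=
    ent_comp_inj' μ _ _ _ (inj_pl he) (fun ω => by rw [hc ω])
  have h2 : ent μ (fun ω => (f' ω, g ω, h ω)) = ent μ (fun ω => (f ω, g ω, h ω)) :=
    ent_comp_inj' μ _ _ _ (inj_pl he) (fun ω => by rw [hc ω])
  rw [h1, h2]

lemma cmi_g_inj (f : Ω → A) (g' : Ω → B') (g : Ω → B) (h : Ω → C) (e : B → B')
    (he : Function.Injective e) (hc : ∀ ω, g' ω = e (g ω)) :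
    cmi μ f g' h = cmi μ f g h := by
  unfold cmi
  have h1 : ent μ (fun ω => (g' ω, h ω)) = ent μ (fun ω => (g ω, h ω)) :=
    ent_comp_inj' μ _ _ _ (inj_pl he) (fun ω => by rw [hc ω])
  have h2 : ent μ (fun ω => (f ω, g' ω, h ω)) = ent μ (fun ω => (f ω, g ω, h ω)) :=
    ent_comp_inj' μ _ _ _ (inj_pr (inj_pl he)) (fun ω => by rw [hc ω])
  rw [h1, h2]

lemma cmi_h_inj (f : Ω → A) (g : Ω → B) (h' : Ω → C') (h : Ω → C) (e : C → C')
    (he : Function.Injective e) (hc : ∀ ω, h' ω = e (h ω)) :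
    cmi μ f g h' = cmi μ f g h := by
  unfold cmi
  have h1 : ent μ (fun ω => (f ω, h' ω)) = ent μ (fun ω => (f ω, h ω)) :=
    ent_comp_inj' μ _ _ _ (inj_pr he) (fun ω => by rw [hc ω])
  have h2 : ent μ (fun ω => (g ω, h' ω)) = ent μ (fun ω => (g ω, h ω)) :=
    ent_comp_inj' μ _ _ _ (inj_pr he) (fun ω => by rw [hc ω])
  have h3 : ent μ (fun ω => (f ω, g ω, h' ω)) = ent μ (fun ω => (f ω, g ω, h ω)) :=
    ent_comp_inj' μ _ _ _ (inj_pr (inj_pr he)) (fun ω => by rw [hc ω])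
  have h4 : ent μ h' = ent μ h := ent_comp_inj' μ _ _ _ he hc
  rw [h1, h2, h3, h4]

lemma cmi_symm (f : Ω → A) (g : Ω → B) (h : Ω → C) :
    cmi μ f g h = cmi μ g f h := by
  unfold cmi
  have hinj : Function.Injective (fun p : A × B × C => (p.2.1, p.1, p.2.2)) := by
    rintro ⟨a, b, c⟩ ⟨a', b', c'⟩ hp
    simp only [Prod.mk.injEq] at hp
    obtain ⟨h1, h2, h3⟩ := hp
    subst h1; subst h2; subst h3; rfl
  have h3 : ent μ (fun ω => (g ω, f ω, h ω)) = ent μ (fun ω => (f ω, g ω, h ω)) :=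
    ent_comp_inj' μ _ _ _ hinj (fun ω => rfl)
  rw [h3]
  ring

lemma cmi_chain_g (f : Ω → A) (g₁ : Ω → B) (g₂ : Ω → B') (h : Ω → C) :
    cmi μ f (fun ω => (g₁ ω, g₂ ω)) h
      = cmi μ f g₁ h + cmi μ f g₂ (fun ω => (g₁ ω, h ω)) := by
  unfold cmi
  have hinj1 : Function.Injective (fun p : (B × B') × C => (p.1.2, p.1.1, p.2)) := by
    rintro ⟨⟨b1, b2⟩, c⟩ ⟨⟨b1', b2'⟩, c'⟩ hp
    simp only [Prod.mk.injEq] at hp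
    obtain ⟨h1, h2, h3⟩ := hp
    subst h1; subst h2; subst h3; rfl
  have hinj2 : Function.Injective
      (fun p : A × (B × B') × C => (p.1, p.2.1.2, p.2.1.1, p.2.2)) := by
    rintro ⟨a, ⟨b1, b2⟩, c⟩ ⟨a', ⟨b1', b2'⟩, c'⟩ hp
    simp only [Prod.mk.injEq] at hp
    obtain ⟨h0, h1, h2, h3⟩ := hp
    subst h0; subst h1; subst h2; subst h3; rfl
  have e1 : ent μ (fun ω => (g₂ ω, g₁ ω, h ω)) = ent μ (fun ω => ((g₁ ω, g₂ ω), h ω)) :=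
    ent_comp_inj' μ _ _ _ hinj1 (fun ω => rfl)
  have e2 : ent μ (fun ω => (f ω, g₂ ω, g₁ ω, h ω))
      = ent μ (fun ω => (f ω, (g₁ ω, g₂ ω), h ω)) :=
    ent_comp_inj' μ _ _ _ hinj2 (fun ω => rfl)
  rw [e1, e2]
  ring

lemma cmi_chain_f (f₁ : Ω → A) (f₂ : Ω → A') (g : Ω → B) (h : Ω → C) :
    cmi μ (fun ω => (f₁ ω, f₂ ω)) g h
      = cmi μ f₁ g h + cmi μ f₂ g (fun ω => (f₁ ω, h ω)) := by
  rw [cmi_symm μ (fun ω => (f₁ ω, f₂ ω)) g h, cmi_chain_g μ g f₁ f₂ h,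
    cmi_symm μ g f₁ h, cmi_symm μ g f₂ (fun ω => (f₁ ω, h ω))]

lemma cmi_chain_f' (f₁ : Ω → A) (f₂ : Ω → A') (g : Ω → B) (h : Ω → C) :
    cmi μ (fun ω => (f₁ ω, f₂ ω)) g h
      = cmi μ f₂ g h + cmi μ f₁ g (fun ω => (f₂ ω, h ω)) := by
  have hswap : cmi μ (fun ω => (f₁ ω, f₂ ω)) g h = cmi μ (fun ω => (f₂ ω, f₁ ω)) g h :=
    (cmi_f_inj μ _ (fun ω => (f₂ ω, f₁ ω)) g h Prod.swap Prod.swap_injective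
      (fun ω => rfl))
  rw [hswap, cmi_chain_f μ f₂ f₁ g h]

lemma cmi_cond_le (hμ : ∀ ω, 0 ≤ μ ω) (f : Ω → A) (g : Ω → B) (d : Ω → A') (h : Ω → C) :
    cmi μ f g (fun ω => (d ω, h ω)) ≤ cmi μ (fun ω => (d ω, f ω)) g h := by
  rw [cmi_chain_f μ d f g h]
  have := cmi_nonneg μ hμ d g h
  linarith

end Inj

section EquivSec
variable {Ω Ω' : Type} [Fintype Ω] [Fintype Ω'] {A B C : Type}
  [Fintype A] [DecidableEq A] [Fintype B] [DecidableEq B] [Fintype C] [DecidableEq C]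

lemma pr_equiv (μ : Ω → ℝ) (e : Ω' ≃ Ω) (f : Ω → A) (a : A) :
    pr (fun ω' => μ (e ω')) (fun ω' => f (e ω')) a = pr μ f a :=
  Equiv.sum_comp e (fun ω => if f ω = a then μ ω else 0)

lemma ent_equiv (μ : Ω → ℝ) (e : Ω' ≃ Ω) (f : Ω → A) :
    ent (fun ω' => μ (e ω')) (fun ω' => f (e ω')) = ent μ f := by
  unfold ent
  congr 1
  exact Finset.sum_congr rfl fun a _ => by rw [pr_equiv μ e f a]

lemma cmi_equiv (μ : Ω → ℝ) (e : Ω' ≃ Ω) (f : Ω → A) (g : Ω → B) (h : Ω → C) :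
    cmi (fun ω' => μ (e ω')) (fun ω' => f (e ω')) (fun ω' => g (e ω')) (fun ω' => h (e ω'))
      = cmi μ f g h := by
  unfold cmi
  rw [ent_equiv μ e (fun ω => (f ω, h ω)), ent_equiv μ e (fun ω => (g ω, h ω)),
    ent_equiv μ e (fun ω => (f ω, g ω, h ω)), ent_equiv μ e h]

end EquivSec

section CIabstract
variable {Ω₀ Z K' A' C' : Type} [Fintype Ω₀] [Fintype Z] [DecidableEq Z]
  [Fintype K'] [DecidableEq K'] [Fintype A'] [DecidableEq A'] [Fintype C'] [DecidableEq C']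

lemma ci_abstract (Am : Ω₀ → ℝ) (B : K' → Z → ℝ) (hA : ∀ x, 0 ≤ Am x)
    (hB : ∀ k z, 0 ≤ B k z) (k : Ω₀ → K') (F : Ω₀ → A') (G : Ω₀ → C') :
    cmi (fun ω : Ω₀ × Z => Am ω.1 * B (k ω.1) ω.2) (fun ω => F ω.1) (fun ω => ω.2)
      (fun ω => (k ω.1, G ω.1)) = 0 := by
  set μ' : Ω₀ × Z → ℝ := fun ω => Am ω.1 * B (k ω.1) ω.2 with hμ'
  have hμ0 : ∀ ω, 0 ≤ μ' ω := fun ω => mul_nonneg (hA _) (hB _ _)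
  apply cmi_eq_zero_of_indep μ' hμ0
  rintro a b ⟨κ, c⟩
  set T : A' → ℝ := fun a => ∑ ω₀, if F ω₀ = a ∧ k ω₀ = κ ∧ G ω₀ = c then Am ω₀ else 0 with hT
  set T' : ℝ := ∑ ω₀, if k ω₀ = κ ∧ G ω₀ = c then Am ω₀ else 0 with hT'
  have c1 : pr μ' (fun ω => (F ω.1, ω.2, (k ω.1, G ω.1))) (a, b, (κ, c)) = B κ b * T a := by
    unfold pr
    rw [Fintype.sum_prod_type, hT, Finset.mul_sum]
    refine Finset.sum_congr rfl fun ω₀ _ => ?_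
    by_cases hP : F ω₀ = a ∧ k ω₀ = κ ∧ G ω₀ = c
    · obtain ⟨h1, h2, h3⟩ := hP
      rw [if_pos ⟨h1, h2, h3⟩]
      simp only [hμ', h1, h2, h3, Prod.mk.injEq, true_and, and_true]
      rw [Finset.sum_ite_eq' Finset.univ b (fun z => Am ω₀ * B κ z)]
      simp [mul_comm]
    · rw [if_neg hP, mul_zero]
      refine Finset.sum_eq_zero fun z _ => if_neg fun hc => hP ?_
      simp only [Prod.mk.injEq] at hc
      exact ⟨hc.1, hc.2.2.1, hc.2.2.2⟩
  have c2 : pr μ' (fun ω => (F ω.1, (k ω.1, G ω.1))) (a, (κ, c)) = (∑ z, B κ z) * T a := by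
    unfold pr
    rw [Fintype.sum_prod_type, hT, Finset.mul_sum]
    refine Finset.sum_congr rfl fun ω₀ _ => ?_
    by_cases hP : F ω₀ = a ∧ k ω₀ = κ ∧ G ω₀ = c
    · obtain ⟨h1, h2, h3⟩ := hP
      rw [if_pos ⟨h1, h2, h3⟩]
      trans (∑ z : Z, Am ω₀ * B κ z)
      · exact Finset.sum_congr rfl fun z _ => by simp [hμ', h1, h2, h3]
      · rw [← Finset.mul_sum, mul_comm]
    · rw [if_neg hP, mul_zero]
      refine Finset.sum_eq_zero fun z _ => if_neg fun hc => hP ?_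
      simp only [Prod.mk.injEq] at hc
      exact ⟨hc.1, hc.2.1, hc.2.2⟩
  have c3 : pr μ' (fun ω => (ω.2, (k ω.1, G ω.1))) (b, (κ, c)) = B κ b * T' := by
    unfold pr
    rw [Fintype.sum_prod_type, hT', Finset.mul_sum]
    refine Finset.sum_congr rfl fun ω₀ _ => ?_
    by_cases hP : k ω₀ = κ ∧ G ω₀ = c
    · obtain ⟨h2, h3⟩ := hP
      rw [if_pos ⟨h2, h3⟩]
      simp only [hμ', h2, h3, Prod.mk.injEq, true_and, and_true]
      rw [Finset.sum_ite_eq' Finset.univ b (fun z => Am ω₀ * B κ z)]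
      simp [mul_comm]
    · rw [if_neg hP, mul_zero]
      refine Finset.sum_eq_zero fun z _ => if_neg fun hc => hP ?_
      simp only [Prod.mk.injEq] at hc
      exact ⟨hc.2.1, hc.2.2⟩
  have c4 : pr μ' (fun ω => (k ω.1, G ω.1)) (κ, c) = (∑ z, B κ z) * T' := by
    unfold pr
    rw [Fintype.sum_prod_type, hT', Finset.mul_sum]
    refine Finset.sum_congr rfl fun ω₀ _ => ?_
    by_cases hP : k ω₀ = κ ∧ G ω₀ = c
    · obtain ⟨h2, h3⟩ := hP
      rw [if_pos ⟨h2, h3⟩]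
      trans (∑ z : Z, Am ω₀ * B κ z)
      · exact Finset.sum_congr rfl fun z _ => by simp [hμ', h2, h3]
      · rw [← Finset.mul_sum, mul_comm]
    · rw [if_neg hP, mul_zero]
      refine Finset.sum_eq_zero fun z _ => if_neg fun hc => hP ?_
      simp only [Prod.mk.injEq] at hc
      exact ⟨hc.1, hc.2⟩
  rw [c1, c2, c3, c4]
  ring

end CIabstract

section CISamp

variable {M : ℕ} {𝒳 𝒵 : Fin M → Type} {𝒮 : Type}

/-- The part of the sample space other than the Z-coordinates in `K`. -/
abbrev Omega0 (𝒳 𝒵 : Fin M → Type) (𝒮 : Type) (K : Finset (Fin M)) : Type :=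
  ((∀ i, 𝒳 i) × 𝒮) × (∀ j : {j : Fin M // j ∉ K}, 𝒵 j)

def rhoK (K : Finset (Fin M)) : Samp 𝒳 𝒵 𝒮 → Omega0 𝒳 𝒵 𝒮 K :=
  fun ω => (ω.1, fun j => ω.2 j)

def eK (K : Finset (Fin M)) :
    (Omega0 𝒳 𝒵 𝒮 K × (∀ j : {j : Fin M // j ∈ K}, 𝒵 j)) ≃ Samp 𝒳 𝒵 𝒮 where
  toFun ω := (ω.1.1, fun j => if h : j ∈ K then ω.2 ⟨j, h⟩ else ω.1.2 ⟨j, h⟩)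
  invFun ω := ((ω.1, fun j => ω.2 j), fun j => ω.2 j)
  left_inv := by
    rintro ⟨⟨xs, w⟩, v⟩
    refine Prod.ext (Prod.ext rfl ?_) ?_ <;> funext j <;> rcases j with ⟨j, hj⟩ <;>
      simp [hj]
  right_inv := by
    rintro ⟨xs, z⟩
    refine Prod.ext rfl ?_
    funext j
    by_cases hj : j ∈ K <;> simp [hj]

def AmK (p : (∀ i, 𝒳 i) × 𝒮 → ℝ) (q : ∀ i, 𝒳 i → 𝒵 i → ℝ) (K : Finset (Fin M)) :
    Omega0 𝒳 𝒵 𝒮 K → ℝ :=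
  fun ω₀ => p ω₀.1 * ∏ j : {j : Fin M // j ∉ K}, q j (ω₀.1.1 j) (ω₀.2 j)

def BK (q : ∀ i, 𝒳 i → 𝒵 i → ℝ) (K : Finset (Fin M)) :
    (∀ j : {j : Fin M // j ∈ K}, 𝒳 j) → (∀ j : {j : Fin M // j ∈ K}, 𝒵 j) → ℝ :=
  fun xv zv => ∏ j : {j : Fin M // j ∈ K}, q j (xv j) (zv j)

def kK (K : Finset (Fin M)) : Omega0 𝒳 𝒵 𝒮 K → ∀ j : {j : Fin M // j ∈ K}, 𝒳 j :=
  fun ω₀ j => ω₀.1.1 j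

lemma jointPMF_eK (p : (∀ i, 𝒳 i) × 𝒮 → ℝ) (q : ∀ i, 𝒳 i → 𝒵 i → ℝ)
    (K : Finset (Fin M)) (ω : Omega0 𝒳 𝒵 𝒮 K × (∀ j : {j : Fin M // j ∈ K}, 𝒵 j)) :
    jointPMF p q (eK K ω) = AmK p q K ω.1 * BK q K (kK K ω.1) ω.2 := by
  obtain ⟨⟨⟨xs, s⟩, w⟩, v⟩ := ω
  unfold jointPMF AmK BK kK eK
  simp only [Equiv.coe_fn_mk]
  rw [← Fintype.prod_subtype_mul_prod_subtype (fun j => j ∈ K)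
    (fun j => q j (xs j) (if h : j ∈ K then v ⟨j, h⟩ else w ⟨j, h⟩))]
  trans (p (xs, s) * ((∏ j : {j : Fin M // j ∈ K}, q j (xs j) (v j))
      * ∏ j : {j : Fin M // j ∉ K}, q j (xs j) (w j)))
  · exact congrArg (fun t => p (xs, s) * t) (congrArg₂ (· * ·)
      (Finset.prod_congr (by congr 1 <;> exact Subsingleton.elim _ _) fun j _ => by simp [j.2])
      (Finset.prod_congr (by congr 1 <;> exact Subsingleton.elim _ _) fun j _ => by simp [j.2]))
  · ring

end CISamp

section CISamp2

variable {M : ℕ} {𝒳 𝒵 : Fin M → Type} {𝒮 : Type}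
  [∀ i, Fintype (𝒳 i)] [∀ i, DecidableEq (𝒳 i)]
  [∀ i, Fintype (𝒵 i)] [∀ i, DecidableEq (𝒵 i)] [Fintype 𝒮] [DecidableEq 𝒮]

lemma jointPMF_nonneg (p : (∀ i, 𝒳 i) × 𝒮 → ℝ) (q : ∀ i, 𝒳 i → 𝒵 i → ℝ)
    (hp0 : ∀ a, 0 ≤ p a) (hq0 : ∀ i x z, 0 ≤ q i x z) :
    ∀ ω, 0 ≤ jointPMF p q ω := fun ω =>
  mul_nonneg (hp0 _) (Finset.prod_nonneg fun i _ => hq0 _ _ _)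

lemma ci_samp (p : (∀ i, 𝒳 i) × 𝒮 → ℝ) (q : ∀ i, 𝒳 i → 𝒵 i → ℝ)
    (hp0 : ∀ a, 0 ≤ p a) (hq0 : ∀ i x z, 0 ≤ q i x z)
    (K : Finset (Fin M)) {A' C' : Type} [Fintype A'] [DecidableEq A']
    [Fintype C'] [DecidableEq C']
    (F : Omega0 𝒳 𝒵 𝒮 K → A') (G : Omega0 𝒳 𝒵 𝒮 K → C') :
    cmi (jointPMF p q) (fun ω => F (rhoK K ω)) (ZI K)
      (fun ω => (XI K ω, G (rhoK K ω))) = 0 := by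
  rw [← cmi_equiv (jointPMF p q) (eK K) (fun ω => F (rhoK K ω)) (ZI K)
    (fun ω => (XI K ω, G (rhoK K ω)))]
  have hρ : ∀ ω' : Omega0 𝒳 𝒵 𝒮 K × (∀ j : {j : Fin M // j ∈ K}, 𝒵 j),
      rhoK K (eK K ω') = ω'.1 := by
    rintro ⟨⟨⟨xs, s⟩, w⟩, v⟩
    refine Prod.ext rfl ?_
    funext j
    rcases j with ⟨j, hj⟩
    simp [rhoK, eK, hj]
  have h1 : (fun ω' : Omega0 𝒳 𝒵 𝒮 K × (∀ j : {j : Fin M // j ∈ K}, 𝒵 j) =>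
      jointPMF p q (eK K ω')) = (fun ω' => AmK p q K ω'.1 * BK q K (kK K ω'.1) ω'.2) :=
    funext (jointPMF_eK p q K)
  have h2 : (fun ω' : Omega0 𝒳 𝒵 𝒮 K × (∀ j : {j : Fin M // j ∈ K}, 𝒵 j) =>
      F (rhoK K (eK K ω'))) = (fun ω' => F ω'.1) :=
    funext fun ω' => by rw [hρ ω']; try rfl
  have h3 : (fun ω' : Omega0 𝒳 𝒵 𝒮 K × (∀ j : {j : Fin M // j ∈ K}, 𝒵 j) =>
      ZI K (eK K ω')) = (fun ω' => ω'.2) := by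
    funext ω'
    funext j
    rcases ω' with ⟨⟨⟨xs, s⟩, w⟩, v⟩
    rcases j with ⟨j, hj⟩
    simp [ZI, eK, hj]
  have h4 : (fun ω' : Omega0 𝒳 𝒵 𝒮 K × (∀ j : {j : Fin M // j ∈ K}, 𝒵 j) =>
      (XI K (eK K ω'), G (rhoK K (eK K ω')))) = (fun ω' => (kK K ω'.1, G ω'.1)) :=
    funext fun ω' => by rw [hρ ω']; try rfl
  rw [h1, h2, h3, h4]
  exact ci_abstract (AmK p q K) (BK q K)
    (fun x => mul_nonneg (hp0 _) (Finset.prod_nonneg fun j _ => hq0 _ _ _))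
    (fun kv zv => Finset.prod_nonneg fun j _ => hq0 _ _ _)
    (kK K) F G

end CISamp2

section Helpers

variable {M : ℕ}

def splitEl (β : Fin M → Type) (I : Finset (Fin M)) (i₀ : Fin M) (h : i₀ ∈ I) :
    (∀ j : I, β j) → β i₀ × (∀ j : I.erase i₀, β j) :=
  fun v => (v ⟨i₀, h⟩, fun j => v ⟨j.1, Finset.mem_of_mem_erase j.2⟩)

lemma splitEl_inj (β : Fin M → Type) (I : Finset (Fin M)) (i₀ : Fin M) (h : i₀ ∈ I) :
    Function.Injective (splitEl β I i₀ h) := by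
  intro u v huv
  funext j
  rcases j with ⟨j, hj⟩
  by_cases hji : j = i₀
  · subst hji
    exact congrArg Prod.fst huv
  · exact congrFun (congrArg Prod.snd huv) ⟨j, Finset.mem_erase.2 ⟨hji, hj⟩⟩

def evalSing (β : Fin M → Type) (i₀ : Fin M) :
    (∀ j : ({i₀} : Finset (Fin M)), β j) → β i₀ :=
  fun v => v ⟨i₀, Finset.mem_singleton_self i₀⟩

lemma evalSing_inj (β : Fin M → Type) (i₀ : Fin M) :
    Function.Injective (evalSing β i₀) := by
  intro u v huv
  funext j
  rcases j with ⟨j, hj⟩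
  have hj' : j = i₀ := Finset.mem_singleton.1 hj
  subst hj'
  exact huv

/-- Restriction map between pi types over finsets, for `V ⊆ U`. -/
def restr (β : Fin M → Type) (U V : Finset (Fin M)) (hVU : ∀ j, j ∈ V → j ∈ U) :
    (∀ j : U, β j) → (∀ j : V, β j) :=
  fun v j => v ⟨j.1, hVU j.1 j.2⟩

lemma restr_inj (β : Fin M → Type) (U V : Finset (Fin M)) (hVU : ∀ j, j ∈ V → j ∈ U)
    (hUV : ∀ j, j ∈ U → j ∈ V) : Function.Injective (restr β U V hVU) := by
  intro u v huv
  funext j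
  rcases j with ⟨j, hj⟩
  exact congrFun huv ⟨j, hUV j hj⟩

end Helpers

section MainInd

variable {M : ℕ} {𝒳 𝒵 : Fin M → Type} {𝒮 : Type}
  [∀ i, Fintype (𝒳 i)] [∀ i, DecidableEq (𝒳 i)]
  [∀ i, Fintype (𝒵 i)] [∀ i, DecidableEq (𝒵 i)] [Fintype 𝒮] [DecidableEq 𝒮]

lemma cmi_empty (μ : Samp 𝒳 𝒵 𝒮 → ℝ) :
    cmi μ (XI (∅ : Finset (Fin M))) (ZI (∅ : Finset (Fin M)))
      (fun ω => (ZI (∅ : Finset (Fin M))ᶜ ω, Sv ω)) = 0 := by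
  have huniq : ∀ (β : Fin M → Type) (u v : ∀ j : (∅ : Finset (Fin M)), β j), u = v := by
    intro β u v
    funext j
    exact absurd j.2 (Finset.notMem_empty j.1)
  -- both XI ∅ and ZI ∅ have subsingleton codomain; reduce all entropies
  unfold cmi
  have key : ∀ {A : Type} [Fintype A] [DecidableEq A]
      (f : Samp 𝒳 𝒵 𝒮 → (∀ j : (∅ : Finset (Fin M)), 𝒳 j))
      (g : Samp 𝒳 𝒵 𝒮 → A),
      ent μ (fun ω => (f ω, g ω)) = ent μ g := by
    intro A _ _ f g
    refine ent_comp_inj' μ _ g (fun a => ((fun j => absurd j.2 (Finset.notMem_empty j.1)), a))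
      ?_ ?_
    · intro a a' haa
      simpa using congrArg Prod.snd haa
    · intro ω
      exact Prod.ext (huniq _ _ _) rfl
  have key2 : ∀ {A : Type} [Fintype A] [DecidableEq A]
      (f : Samp 𝒳 𝒵 𝒮 → (∀ j : (∅ : Finset (Fin M)), 𝒵 j))
      (g : Samp 𝒳 𝒵 𝒮 → A),
      ent μ (fun ω => (f ω, g ω)) = ent μ g := by
    intro A _ _ f g
    refine ent_comp_inj' μ _ g (fun a => ((fun j => absurd j.2 (Finset.notMem_empty j.1)), a))
      ?_ ?_
    · intro a a' haa
      simpa using congrArg Prod.snd haa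
    · intro ω
      exact Prod.ext (huniq _ _ _) rfl
  rw [key (XI ∅) (fun ω => (ZI (∅ : Finset (Fin M))ᶜ ω, Sv ω)),
    key2 (ZI ∅) (fun ω => (ZI (∅ : Finset (Fin M))ᶜ ω, Sv ω)),
    key (XI ∅) (fun ω => (ZI (∅ : Finset (Fin M)) ω, (ZI (∅ : Finset (Fin M))ᶜ ω, Sv ω))),
    key2 (ZI ∅) (fun ω => (ZI (∅ : Finset (Fin M))ᶜ ω, Sv ω))]
  ring

end MainInd

section MainInd2

variable {M : ℕ} {𝒳 𝒵 : Fin M → Type} {𝒮 : Type}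
  [∀ i, Fintype (𝒳 i)] [∀ i, DecidableEq (𝒳 i)]
  [∀ i, Fintype (𝒵 i)] [∀ i, DecidableEq (𝒵 i)] [Fintype 𝒮] [DecidableEq 𝒮]
variable (p : (∀ i, 𝒳 i) × 𝒮 → ℝ) (q : ∀ i, 𝒳 i → 𝒵 i → ℝ)

set_option maxHeartbeats 1000000 in
lemma struct_eq (hp0 : ∀ a, 0 ≤ p a) (hq0 : ∀ i x z, 0 ≤ q i x z)
    (I : Finset (Fin M)) (i₀ : Fin M) (hi₀I : i₀ ∈ I) :
    cmi (jointPMF p q) (XI I) (ZI I) (fun ω => (ZI Iᶜ ω, Sv ω))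
      = cmi (jointPMF p q) (XI I) (fun ω => ω.2 i₀) (fun ω => (ZI Iᶜ ω, Sv ω))
        + cmi (jointPMF p q) (XI (I.erase i₀)) (ZI (I.erase i₀))
          (fun ω => (ZI (I.erase i₀)ᶜ ω, Sv ω)) := by
  have hsplitg : cmi (jointPMF p q) (XI I) (ZI I) (fun ω => (ZI Iᶜ ω, Sv ω))
      = cmi (jointPMF p q) (XI I) (fun ω => (ω.2 i₀, ZI (I.erase i₀) ω))
        (fun ω => (ZI Iᶜ ω, Sv ω)) :=
    (cmi_g_inj (jointPMF p q) (XI I) (fun ω => (ω.2 i₀, ZI (I.erase i₀) ω)) (ZI I)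
      (fun ω => (ZI Iᶜ ω, Sv ω)) (splitEl 𝒵 I i₀ hi₀I) (splitEl_inj 𝒵 I i₀ hi₀I)
      (fun ω => rfl)).symm
  have hchaing : cmi (jointPMF p q) (XI I) (fun ω => (ω.2 i₀, ZI (I.erase i₀) ω))
        (fun ω => (ZI Iᶜ ω, Sv ω))
      = cmi (jointPMF p q) (XI I) (fun ω => ω.2 i₀) (fun ω => (ZI Iᶜ ω, Sv ω))
        + cmi (jointPMF p q) (XI I) (ZI (I.erase i₀))
          (fun ω => (ω.2 i₀, (ZI Iᶜ ω, Sv ω))) :=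
    cmi_chain_g (jointPMF p q) (XI I) (fun ω => ω.2 i₀) (ZI (I.erase i₀))
      (fun ω => (ZI Iᶜ ω, Sv ω))
  have hi₀ec : i₀ ∈ (I.erase i₀)ᶜ := Finset.mem_compl.2 (Finset.notMem_erase i₀ I)
  have hsubc : ∀ j, j ∈ Iᶜ → j ∈ (I.erase i₀)ᶜ := fun j hj =>
    Finset.mem_compl.2 fun hmem => Finset.mem_compl.1 hj (Finset.mem_of_mem_erase hmem)
  have hγ : cmi (jointPMF p q) (XI I) (ZI (I.erase i₀))
        (fun ω => (ω.2 i₀, (ZI Iᶜ ω, Sv ω)))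
      = cmi (jointPMF p q) (XI I) (ZI (I.erase i₀))
        (fun ω => (ZI (I.erase i₀)ᶜ ω, Sv ω)) := by
    refine cmi_h_inj (jointPMF p q) (XI I) (ZI (I.erase i₀))
      (fun ω => (ω.2 i₀, (ZI Iᶜ ω, Sv ω)))
      (fun ω => (ZI (I.erase i₀)ᶜ ω, Sv ω))
      (fun t => (t.1 ⟨i₀, hi₀ec⟩, (restr 𝒵 ((I.erase i₀)ᶜ) (Iᶜ) hsubc t.1, t.2)))
      ?_ (fun ω => rfl)
    intro u v huv
    simp only [Prod.mk.injEq] at huv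
    obtain ⟨h1, h2, h3⟩ := huv
    refine Prod.ext ?_ h3
    funext j
    rcases j with ⟨j, hj⟩
    by_cases hji : j = i₀
    · subst hji
      exact h1
    · have hjIc : j ∈ Iᶜ := by
        rw [Finset.mem_compl] at hj ⊢
        intro hmem
        exact hj (Finset.mem_erase.2 ⟨hji, hmem⟩)
      exact congrFun h2 ⟨j, hjIc⟩
  have hsplitf : cmi (jointPMF p q) (XI I) (ZI (I.erase i₀))
        (fun ω => (ZI (I.erase i₀)ᶜ ω, Sv ω))
      = cmi (jointPMF p q) (fun ω => (ω.1.1 i₀, XI (I.erase i₀) ω)) (ZI (I.erase i₀))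
        (fun ω => (ZI (I.erase i₀)ᶜ ω, Sv ω)) :=
    (cmi_f_inj (jointPMF p q) (fun ω => (ω.1.1 i₀, XI (I.erase i₀) ω)) (XI I)
      (ZI (I.erase i₀)) (fun ω => (ZI (I.erase i₀)ᶜ ω, Sv ω))
      (splitEl 𝒳 I i₀ hi₀I) (splitEl_inj 𝒳 I i₀ hi₀I) (fun ω => rfl)).symm
  have hchainf : cmi (jointPMF p q) (fun ω => (ω.1.1 i₀, XI (I.erase i₀) ω))
        (ZI (I.erase i₀)) (fun ω => (ZI (I.erase i₀)ᶜ ω, Sv ω))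
      = cmi (jointPMF p q) (XI (I.erase i₀)) (ZI (I.erase i₀))
          (fun ω => (ZI (I.erase i₀)ᶜ ω, Sv ω))
        + cmi (jointPMF p q) (fun ω => ω.1.1 i₀) (ZI (I.erase i₀))
          (fun ω => (XI (I.erase i₀) ω, (ZI (I.erase i₀)ᶜ ω, Sv ω))) :=
    cmi_chain_f' (jointPMF p q) (fun ω => ω.1.1 i₀) (XI (I.erase i₀)) (ZI (I.erase i₀))
      (fun ω => (ZI (I.erase i₀)ᶜ ω, Sv ω))
  have hzeroδ : cmi (jointPMF p q) (fun ω => ω.1.1 i₀) (ZI (I.erase i₀))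
        (fun ω => (XI (I.erase i₀) ω, (ZI (I.erase i₀)ᶜ ω, Sv ω))) = 0 :=
    ci_samp p q hp0 hq0 (I.erase i₀)
      (fun ω₀ => ω₀.1.1 i₀)
      (fun ω₀ => ((fun j : ((I.erase i₀)ᶜ : Finset (Fin M)) =>
        ω₀.2 ⟨j.1, Finset.mem_compl.1 j.2⟩), ω₀.1.2))
  rw [hsplitg, hchaing, hγ, hsplitf, hchainf, hzeroδ, add_zero]

set_option maxHeartbeats 1000000 in
lemma zero_aux (hp0 : ∀ a, 0 ≤ p a) (hq0 : ∀ i x z, 0 ≤ q i x z) (i₀ : Fin M)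
    {A' : Type} [Fintype A'] [DecidableEq A']
    (F : Omega0 𝒳 𝒵 𝒮 ({i₀} : Finset (Fin M)) → A') :
    cmi (jointPMF p q) (fun ω => F (rhoK ({i₀} : Finset (Fin M)) ω))
      (fun ω => ω.2 i₀)
      (fun ω => (ω.1.1 i₀, (ZI (Finset.Iio i₀) ω, Sv ω))) = 0 := by
  have hg : cmi (jointPMF p q) (fun ω => F (rhoK ({i₀} : Finset (Fin M)) ω))
        (fun ω => ω.2 i₀)
        (fun ω => (ω.1.1 i₀, (ZI (Finset.Iio i₀) ω, Sv ω)))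
      = cmi (jointPMF p q) (fun ω => F (rhoK ({i₀} : Finset (Fin M)) ω))
        (ZI ({i₀} : Finset (Fin M)))
        (fun ω => (ω.1.1 i₀, (ZI (Finset.Iio i₀) ω, Sv ω))) :=
    cmi_g_inj (jointPMF p q) (fun ω => F (rhoK ({i₀} : Finset (Fin M)) ω))
      (fun ω => ω.2 i₀) (ZI ({i₀} : Finset (Fin M)))
      (fun ω => (ω.1.1 i₀, (ZI (Finset.Iio i₀) ω, Sv ω)))
      (evalSing 𝒵 i₀) (evalSing_inj 𝒵 i₀) (fun ω => rfl)
  have hh : cmi (jointPMF p q) (fun ω => F (rhoK ({i₀} : Finset (Fin M)) ω))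
        (ZI ({i₀} : Finset (Fin M)))
        (fun ω => (ω.1.1 i₀, (ZI (Finset.Iio i₀) ω, Sv ω)))
      = cmi (jointPMF p q) (fun ω => F (rhoK ({i₀} : Finset (Fin M)) ω))
        (ZI ({i₀} : Finset (Fin M)))
        (fun ω => (XI ({i₀} : Finset (Fin M)) ω, (ZI (Finset.Iio i₀) ω, Sv ω))) :=
    cmi_h_inj (jointPMF p q) (fun ω => F (rhoK ({i₀} : Finset (Fin M)) ω))
      (ZI ({i₀} : Finset (Fin M)))
      (fun ω => (ω.1.1 i₀, (ZI (Finset.Iio i₀) ω, Sv ω)))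
      (fun ω => (XI ({i₀} : Finset (Fin M)) ω, (ZI (Finset.Iio i₀) ω, Sv ω)))
      (fun t => (evalSing 𝒳 i₀ t.1, t.2)) (inj_pl (evalSing_inj 𝒳 i₀))
      (fun ω => rfl)
  rw [hg, hh]
  exact ci_samp p q hp0 hq0 ({i₀} : Finset (Fin M)) F
    (fun ω₀ => ((fun j : (Finset.Iio i₀ : Finset (Fin M)) =>
      ω₀.2 ⟨j.1, fun hj => absurd (Finset.mem_singleton.1 hj)
        (ne_of_lt (Finset.mem_Iio.1 j.2))⟩), ω₀.1.2))

set_option maxHeartbeats 1000000 in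
lemma A1_cond_repack (I J : Finset (Fin M)) (i₀ : Fin M)
    (hlt_not : ∀ j : Fin M, j < i₀ → j ∉ I)
    (hJIc : ∀ j, j ∈ J → j ∈ Iᶜ) (hJnlt : ∀ j, j ∈ J → ¬ j < i₀)
    (hJmem : ∀ j, j ∈ Iᶜ → ¬ j < i₀ → j ∈ J) :
    cmi (jointPMF p q) (XI I) (fun ω => ω.2 i₀) (fun ω => (ZI Iᶜ ω, Sv ω))
      = cmi (jointPMF p q) (XI I) (fun ω => ω.2 i₀)
        (fun ω => (ZI J ω, (ZI (Finset.Iio i₀) ω, Sv ω))) := by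
  refine cmi_h_inj (jointPMF p q) (XI I) (fun ω => ω.2 i₀)
    (fun ω => (ZI Iᶜ ω, Sv ω))
    (fun ω => (ZI J ω, (ZI (Finset.Iio i₀) ω, Sv ω)))
    (fun t => ((fun j : (Iᶜ : Finset (Fin M)) =>
      if h : (j : Fin M) < i₀ then t.2.1 ⟨j.1, Finset.mem_Iio.2 h⟩
      else t.1 ⟨j.1, hJmem j.1 j.2 h⟩), t.2.2))
    ?_ ?_
  · intro u v huv
    simp only [Prod.mk.injEq] at huv
    obtain ⟨hfn, hs⟩ := huv
    refine Prod.ext ?_ (Prod.ext ?_ hs)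
    · funext j
      rcases j with ⟨j, hj⟩
      have hnlt : ¬ (j < i₀) := hJnlt j hj
      have h1 := congrFun hfn ⟨j, hJIc j hj⟩
      simpa [hnlt] using h1
    · funext j
      rcases j with ⟨j, hj⟩
      have hlt : j < i₀ := Finset.mem_Iio.1 hj
      have hjIc : j ∈ Iᶜ := Finset.mem_compl.2 (hlt_not j hlt)
      have h1 := congrFun hfn ⟨j, hjIc⟩
      simpa [hlt] using h1
  · intro ω
    refine Prod.ext ?_ rfl
    funext j
    rcases j with ⟨j, hj⟩
    by_cases hlt : j < i₀
    · simp [hlt, ZI]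
    · simp [hlt, ZI]

set_option maxHeartbeats 1000000 in
lemma A1_f_repack (I J : Finset (Fin M)) (i₀ : Fin M) (hi₀I : i₀ ∈ I) :
    cmi (jointPMF p q) (fun ω => (ZI J ω, XI I ω)) (fun ω => ω.2 i₀)
      (fun ω => (ZI (Finset.Iio i₀) ω, Sv ω))
    = cmi (jointPMF p q)
      (fun ω => (ω.1.1 i₀, (ZI J ω, XI (I.erase i₀) ω))) (fun ω => ω.2 i₀)
      (fun ω => (ZI (Finset.Iio i₀) ω, Sv ω)) := by
  refine (cmi_f_inj (jointPMF p q)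
    (fun ω => (ω.1.1 i₀, (ZI J ω, XI (I.erase i₀) ω)))
    (fun ω => (ZI J ω, XI I ω)) (fun ω => ω.2 i₀)
    (fun ω => (ZI (Finset.Iio i₀) ω, Sv ω))
    (fun t => (t.2 ⟨i₀, hi₀I⟩, (t.1, fun j : (I.erase i₀ : Finset (Fin M)) =>
      t.2 ⟨j.1, Finset.mem_of_mem_erase j.2⟩)))
    ?_ (fun ω => rfl)).symm
  intro u v huv
  simp only [Prod.mk.injEq] at huv
  obtain ⟨h1, h2, h3⟩ := huv
  refine Prod.ext h2 ?_
  funext j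
  rcases j with ⟨j, hj⟩
  by_cases hji : j = i₀
  · subst hji
    exact h1
  · exact congrFun h3 ⟨j, Finset.mem_erase.2 ⟨hji, hj⟩⟩

set_option maxHeartbeats 1000000 in
lemma A1_le (hp0 : ∀ a, 0 ≤ p a) (hq0 : ∀ i x z, 0 ≤ q i x z)
    (I : Finset (Fin M)) (i₀ : Fin M) (hi₀I : i₀ ∈ I)
    (hlt_not : ∀ j : Fin M, j < i₀ → j ∉ I) :
    cmi (jointPMF p q) (XI I) (fun ω => ω.2 i₀) (fun ω => (ZI Iᶜ ω, Sv ω))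
      ≤ cmi (jointPMF p q) (fun ω => ω.1.1 i₀) (fun ω => ω.2 i₀)
        (fun ω => (ZI (Finset.Iio i₀) ω, Sv ω)) := by
  obtain ⟨J, hJIc, hJnlt, hJmem, hJsing⟩ : ∃ J : Finset (Fin M), (∀ j, j ∈ J → j ∈ Iᶜ)
      ∧ (∀ j, j ∈ J → ¬ j < i₀) ∧ (∀ j, j ∈ Iᶜ → ¬ j < i₀ → j ∈ J)
      ∧ (∀ j : Fin M, j ∈ J → j ∉ ({i₀} : Finset (Fin M))) := by
    refine ⟨Iᶜ.filter (fun j => i₀ ≤ j), fun j hj => (Finset.mem_filter.1 hj).1,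
      fun j hj => not_lt.2 (Finset.mem_filter.1 hj).2,
      fun j h1 h2 => Finset.mem_filter.2 ⟨h1, not_lt.1 h2⟩, ?_⟩
    intro j hj hsing
    exact Finset.mem_compl.1 (Finset.mem_filter.1 hj).1
      (by rw [Finset.mem_singleton.1 hsing]; exact hi₀I)
  rw [A1_cond_repack p q I J i₀ hlt_not hJIc hJnlt hJmem]
  refine le_trans (cmi_cond_le (jointPMF p q) (jointPMF_nonneg p q hp0 hq0) (XI I)
    (fun ω => ω.2 i₀) (ZI J) (fun ω => (ZI (Finset.Iio i₀) ω, Sv ω))) ?_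
  rw [A1_f_repack p q I J i₀ hi₀I]
  rw [cmi_chain_f (jointPMF p q) (fun ω => ω.1.1 i₀)
    (fun ω => (ZI J ω, XI (I.erase i₀) ω)) (fun ω => ω.2 i₀)
    (fun ω => (ZI (Finset.Iio i₀) ω, Sv ω))]
  have hz : cmi (jointPMF p q) (fun ω => (ZI J ω, XI (I.erase i₀) ω))
      (fun ω => ω.2 i₀)
      (fun ω => (ω.1.1 i₀, (ZI (Finset.Iio i₀) ω, Sv ω))) = 0 :=
    zero_aux p q hp0 hq0 i₀ (fun ω₀ => ((fun j : (J : Finset (Fin M)) =>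
        ω₀.2 ⟨j.1, hJsing j.1 j.2⟩),
      fun j : (I.erase i₀ : Finset (Fin M)) => ω₀.1.1 j))
  rw [hz, add_zero]

set_option maxHeartbeats 1000000 in
lemma A1_eq (hp0 : ∀ a, 0 ≤ p a) (hq0 : ∀ i x z, 0 ≤ q i x z)
    (I : Finset (Fin M)) (i₀ : Fin M) (hi₀I : i₀ ∈ I)
    (hIcIio : ∀ j, j ∈ Iᶜ → j ∈ Finset.Iio i₀)
    (hIioIc : ∀ j, j ∈ Finset.Iio i₀ → j ∈ Iᶜ) :
    cmi (jointPMF p q) (XI I) (fun ω => ω.2 i₀) (fun ω => (ZI Iᶜ ω, Sv ω))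
      = cmi (jointPMF p q) (fun ω => ω.1.1 i₀) (fun ω => ω.2 i₀)
        (fun ω => (ZI (Finset.Iio i₀) ω, Sv ω)) := by
  have hζ1 : cmi (jointPMF p q) (XI I) (fun ω => ω.2 i₀) (fun ω => (ZI Iᶜ ω, Sv ω))
      = cmi (jointPMF p q) (XI I) (fun ω => ω.2 i₀)
        (fun ω => (ZI (Finset.Iio i₀) ω, Sv ω)) := by
    refine cmi_h_inj (jointPMF p q) (XI I) (fun ω => ω.2 i₀)
      (fun ω => (ZI Iᶜ ω, Sv ω))
      (fun ω => (ZI (Finset.Iio i₀) ω, Sv ω))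
      (fun t => (restr 𝒵 (Finset.Iio i₀) Iᶜ hIcIio t.1, t.2))
      ?_ (fun ω => rfl)
    intro u v huv
    simp only [Prod.mk.injEq] at huv
    obtain ⟨h1, h2⟩ := huv
    refine Prod.ext ?_ h2
    funext j
    rcases j with ⟨j, hj⟩
    exact congrFun h1 ⟨j, hIioIc j hj⟩
  have hζ2 : cmi (jointPMF p q) (XI I) (fun ω => ω.2 i₀)
        (fun ω => (ZI (Finset.Iio i₀) ω, Sv ω))
      = cmi (jointPMF p q) (fun ω => (ω.1.1 i₀, XI (I.erase i₀) ω)) (fun ω => ω.2 i₀)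
        (fun ω => (ZI (Finset.Iio i₀) ω, Sv ω)) :=
    (cmi_f_inj (jointPMF p q) (fun ω => (ω.1.1 i₀, XI (I.erase i₀) ω)) (XI I)
      (fun ω => ω.2 i₀) (fun ω => (ZI (Finset.Iio i₀) ω, Sv ω))
      (splitEl 𝒳 I i₀ hi₀I) (splitEl_inj 𝒳 I i₀ hi₀I) (fun ω => rfl)).symm
  have hζ3 : cmi (jointPMF p q) (fun ω => (ω.1.1 i₀, XI (I.erase i₀) ω))
        (fun ω => ω.2 i₀) (fun ω => (ZI (Finset.Iio i₀) ω, Sv ω))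
      = cmi (jointPMF p q) (fun ω => ω.1.1 i₀) (fun ω => ω.2 i₀)
          (fun ω => (ZI (Finset.Iio i₀) ω, Sv ω))
        + cmi (jointPMF p q) (XI (I.erase i₀)) (fun ω => ω.2 i₀)
          (fun ω => (ω.1.1 i₀, (ZI (Finset.Iio i₀) ω, Sv ω))) :=
    cmi_chain_f (jointPMF p q) (fun ω => ω.1.1 i₀) (XI (I.erase i₀))
      (fun ω => ω.2 i₀) (fun ω => (ZI (Finset.Iio i₀) ω, Sv ω))
  have hζ4 : cmi (jointPMF p q) (XI (I.erase i₀)) (fun ω => ω.2 i₀)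
        (fun ω => (ω.1.1 i₀, (ZI (Finset.Iio i₀) ω, Sv ω))) = 0 :=
    zero_aux p q hp0 hq0 i₀
      (fun ω₀ => fun j : (I.erase i₀ : Finset (Fin M)) => ω₀.1.1 j)
  rw [hζ1, hζ2, hζ3, hζ4, add_zero]

set_option maxHeartbeats 1000000 in
theorem main_ind (hp0 : ∀ a, 0 ≤ p a) (hq0 : ∀ i x z, 0 ≤ q i x z)
    (R : Fin M → ℝ)
    (hR : ∀ i, R i = cmi (jointPMF p q) (fun ω => ω.1.1 i) (fun ω => ω.2 i)
      (fun ω => (ZI (Finset.Iio i) ω, Sv ω))) :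
    ∀ n : ℕ, ∀ I : Finset (Fin M), I.card ≤ n →
    (cmi (jointPMF p q) (XI I) (ZI I) (fun ω => (ZI Iᶜ ω, Sv ω)) ≤ ∑ i ∈ I, R i) ∧
    ((∀ i ∈ I, ∀ j : Fin M, i ≤ j → j ∈ I) →
      cmi (jointPMF p q) (XI I) (ZI I) (fun ω => (ZI Iᶜ ω, Sv ω)) = ∑ i ∈ I, R i) := by
  intro n
  induction n with
  | zero =>
    intro I hI
    obtain rfl : I = ∅ := Finset.card_eq_zero.1 (Nat.le_zero.1 hI)
    constructor
    · rw [Finset.sum_empty, cmi_empty (jointPMF p q)]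
    · intro _
      rw [Finset.sum_empty, cmi_empty (jointPMF p q)]
  | succ n ih =>
    intro I hI
    rcases Finset.eq_empty_or_nonempty I with rfl | hne
    · constructor
      · rw [Finset.sum_empty, cmi_empty (jointPMF p q)]
      · intro _
        rw [Finset.sum_empty, cmi_empty (jointPMF p q)]
    obtain ⟨i₀, hi₀I, hmin⟩ : ∃ i₀ ∈ I, ∀ j ∈ I, i₀ ≤ j :=
      ⟨I.min' hne, I.min'_mem hne, fun j hj => I.min'_le j hj⟩
    have hlt_not : ∀ j : Fin M, j < i₀ → j ∉ I :=
      fun j hj hmem => absurd (hmin j hmem) (not_le.2 hj)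
    have hcard : (I.erase i₀).card ≤ n := by
      rw [Finset.card_erase_of_mem hi₀I]
      omega
    obtain ⟨ihle, ihEq⟩ := ih (I.erase i₀) hcard
    have hstruct := struct_eq p q hp0 hq0 I i₀ hi₀I
    have hsum : ∑ i ∈ I, R i = R i₀ + ∑ i ∈ I.erase i₀, R i :=
      (Finset.add_sum_erase I R hi₀I).symm
    constructor
    · rw [hstruct, hsum]
      exact add_le_add (le_of_le_of_eq (A1_le p q hp0 hq0 I i₀ hi₀I hlt_not)
        (hR i₀).symm) ihle
    · intro hup
      have hIcIio : ∀ j, j ∈ Iᶜ → j ∈ Finset.Iio i₀ := by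
        intro j hj
        rw [Finset.mem_Iio]
        by_contra hnot
        exact Finset.mem_compl.1 hj (hup i₀ hi₀I j (not_lt.1 hnot))
      have hIioIc : ∀ j, j ∈ Finset.Iio i₀ → j ∈ Iᶜ := fun j hj =>
        Finset.mem_compl.2 (hlt_not j (Finset.mem_Iio.1 hj))
      have hupE : ∀ i ∈ I.erase i₀, ∀ j : Fin M, i ≤ j → j ∈ I.erase i₀ := by
        intro i hi j hij
        obtain ⟨hine, hiI⟩ := Finset.mem_erase.1 hi
        have hi₀lt : i₀ < i := lt_of_le_of_ne (hmin i hiI) (Ne.symm hine)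
        refine Finset.mem_erase.2 ⟨?_, hup i hiI j hij⟩
        exact ne_of_gt (lt_of_lt_of_le hi₀lt hij)
      rw [hstruct, hsum, A1_eq p q hp0 hq0 I i₀ hi₀I hIcIio hIioIc, ← hR i₀,
        ihEq hupE]

end MainInd2

section Statement

variable {M : ℕ} {𝒳 𝒵 : Fin M → Type} {𝒮 : Type}
  [∀ i, Fintype (𝒳 i)] [∀ i, DecidableEq (𝒳 i)]
  [∀ i, Fintype (𝒵 i)] [∀ i, DecidableEq (𝒵 i)] [Fintype 𝒮] [DecidableEq 𝒮]

/-- Lemma 3 of the paper: the rate vector `R_i = I(X_i; Z_i | Z_{{1..i-1}}, S)` lies in `B*`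
(all constraints hold), and makes the `M` constraints for the nested sets
`I = {m,...,M}`, `1 ≤ m ≤ M`, hold with equality. -/
theorem stmt8 (p : (∀ i, 𝒳 i) × 𝒮 → ℝ) (q : ∀ i, 𝒳 i → 𝒵 i → ℝ)
    (hp0 : ∀ a, 0 ≤ p a) (hp1 : ∑ a, p a = 1)
    (hq0 : ∀ i x z, 0 ≤ q i x z) (hq1 : ∀ i x, ∑ z, q i x z = 1)
    (R : Fin M → ℝ)
    (hR : ∀ i, R i = cmi (jointPMF p q) (fun ω => ω.1.1 i) (fun ω => ω.2 i)
      (fun ω => (ZI (Finset.Iio i) ω, Sv ω))) :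
    (∀ I : Finset (Fin M), I.Nonempty →
      cmi (jointPMF p q) (XI I) (ZI I) (fun ω => (ZI Iᶜ ω, Sv ω)) ≤ ∑ i ∈ I, R i) ∧
    (∀ m : Fin M,
      cmi (jointPMF p q) (XI (Finset.univ.filter (fun i => m ≤ i)))
          (ZI (Finset.univ.filter (fun i => m ≤ i)))
          (fun ω => (ZI (Finset.univ.filter (fun i => m ≤ i))ᶜ ω, Sv ω)) =
        ∑ i ∈ Finset.univ.filter (fun i => m ≤ i), R i) := by
  constructor
  · intro I _
    exact (main_ind p q hp0 hq0 R hR I.card I le_rfl).1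
  · intro m
    refine (main_ind p q hp0 hq0 R hR (Finset.univ.filter (fun i => m ≤ i)).card
      (Finset.univ.filter (fun i => m ≤ i)) le_rfl).2 ?_
    intro i hi j hij
    simp only [Finset.mem_filter, Finset.mem_univ, true_and] at hi ⊢
    exact le_trans hi hij


end Statement
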